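/- Let n ≥ 3, fix k ∈ {1,...,n}, and let f₁,...,fₙ be smooth functions on ℝⁿ depending only on xₖ, with 3fᵢ + fⱼ nowhere zero for i ≠ j. If φ is a smooth positive solution of φ_{,xᵢxᵢ}/φ − |∇φ|²/(2φ²) = φ² fᵢ for every i and φ_{,xᵢxⱼ} = 0 for i ≠ j, then φ depends only on xₖ and all functions fᵢ with i ≠ k coincide, being equal to −(φ')²/(2φ⁴) where φ' = dφ/dxₖ. -/

import Mathlib

noncomputable def pd {n : ℕ} (φ : (Fin n → ℝ) → ℝ) (i : Fin n) (x : Fin n → ℝ) : ℝ :=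
  fderiv ℝ φ x (Pi.single i 1)

private lemma pd_contDiff {n : ℕ} {g : (Fin n → ℝ) → ℝ} (hg : ContDiff ℝ (⊤ : ℕ∞) g) (i : Fin n) :
    ContDiff ℝ (⊤ : ℕ∞) (pd g i) :=
  (hg.fderiv_right (by simp)).clm_apply contDiff_const

private lemma pd_const {n : ℕ} (c : ℝ) (i : Fin n) (x : Fin n → ℝ) :
    pd (fun _ => c) i x = 0 := by
  unfold pd; rw [fderiv_const_apply]; rfl

private lemma pd_mul {n : ℕ} {f g : (Fin n → ℝ) → ℝ} {x : Fin n → ℝ}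
    (hf : DifferentiableAt ℝ f x) (hg : DifferentiableAt ℝ g x) (i : Fin n) :
    pd (fun y => f y * g y) i x = pd f i x * g x + f x * pd g i x := by
  unfold pd
  rw [fderiv_fun_mul hf hg]
  simp
  ring

private lemma pd_sub {n : ℕ} {f g : (Fin n → ℝ) → ℝ} {x : Fin n → ℝ}
    (hf : DifferentiableAt ℝ f x) (hg : DifferentiableAt ℝ g x) (i : Fin n) :
    pd (fun y => f y - g y) i x = pd f i x - pd g i x := by
  unfold pd
  rw [fderiv_fun_sub hf hg]
  rfl

private lemma pd_inv {n : ℕ} {f : (Fin n → ℝ) → ℝ} {x : Fin n → ℝ}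
    (hf : DifferentiableAt ℝ f x) (h0 : f x ≠ 0) (i : Fin n) :
    pd (fun y => (f y)⁻¹) i x = -(pd f i x) / f x ^ 2 := by
  have h := (hasDerivAt_inv h0).comp_hasFDerivAt x hf.hasFDerivAt
  have h2 : HasFDerivAt (fun y => (f y)⁻¹) ((-(f x ^ 2)⁻¹) • fderiv ℝ f x) x := h
  unfold pd
  rw [h2.fderiv]
  simp
  ring

private lemma pd_sum {n : ℕ} {F : Fin n → (Fin n → ℝ) → ℝ} {x : Fin n → ℝ}
    (h : ∀ l, DifferentiableAt ℝ (F l) x) (i : Fin n) :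
    pd (fun y => ∑ l, F l y) i x = ∑ l, pd (F l) i x := by
  unfold pd
  rw [fderiv_fun_sum fun l _ => h l]
  simp

private lemma pd_comm {n : ℕ} {g : (Fin n → ℝ) → ℝ} (hg : ContDiff ℝ (⊤ : ℕ∞) g) (a b : Fin n)
    (x : Fin n → ℝ) : pd (pd g a) b x = pd (pd g b) a x := by
  have hsym : IsSymmSndFDerivAt ℝ g x := hg.contDiffAt.isSymmSndFDerivAt (by simp; exact WithTop.coe_le_coe.mpr le_top)
  have hd : DifferentiableAt ℝ (fderiv ℝ g) x :=
    ((hg.fderiv_right (m := 1) (by exact WithTop.coe_le_coe.mpr le_top)).differentiable one_ne_zero).differentiableAt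
  have h1 : ∀ (v : Fin n → ℝ), fderiv ℝ (fun y => fderiv ℝ g y v) x
      = (fderiv ℝ (fderiv ℝ g) x).flip v := by
    intro v
    rw [fderiv_clm_apply hd (differentiableAt_const v)]
    simp
  unfold pd
  rw [h1, h1]
  simp only [ContinuousLinearMap.flip_apply]
  exact hsym _ _

private lemma pd_eval_comp {n : ℕ} {f : ℝ → ℝ} {x : Fin n → ℝ} {k : Fin n}
    (hf : DifferentiableAt ℝ f (x k)) (j : Fin n) :
    pd (fun y => f (y k)) j x = deriv f (x k) * ((Pi.single j 1 : Fin n → ℝ) k) := by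
  have h := hf.hasDerivAt.comp_hasFDerivAt x
    (ContinuousLinearMap.proj (R := ℝ) (φ := fun _ : Fin n => ℝ) k).hasFDerivAt
  have h2 : HasFDerivAt (fun y => f (y k))
      ((deriv f (x k)) • (ContinuousLinearMap.proj (R := ℝ) (φ := fun _ : Fin n => ℝ) k)) x := h
  unfold pd
  rw [h2.fderiv]
  simp

theorem stmt13 (n : ℕ) (hn : 3 ≤ n) (k : Fin n) (f : Fin n → ℝ → ℝ)
    (hf : ∀ i, ContDiff ℝ (⊤ : ℕ∞) (f i))
    (hne : ∀ i j : Fin n, i ≠ j → ∀ t : ℝ, 3 * f i t + f j t ≠ 0)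
    (φ : (Fin n → ℝ) → ℝ) (hφs : ContDiff ℝ (⊤ : ℕ∞) φ) (hφpos : ∀ x, 0 < φ x)
    (heq : ∀ i : Fin n, ∀ x, pd (pd φ i) i x / φ x
      - (∑ l, (pd φ l x) ^ 2) / (2 * φ x ^ 2) = φ x ^ 2 * f i (x k))
    (hmix : ∀ i j : Fin n, i ≠ j → ∀ x, pd (pd φ j) i x = 0) :
    (∀ x y : Fin n → ℝ, x k = y k → φ x = φ y) ∧
    (∀ i : Fin n, i ≠ k → ∀ x, f i (x k) = -(pd φ k x) ^ 2 / (2 * φ x ^ 4)) := by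
  have hφd : ∀ z, DifferentiableAt ℝ φ z := fun z => (hφs.differentiable (by simp)).differentiableAt
  have hpds : ∀ l, ContDiff ℝ (⊤ : ℕ∞) (pd φ l) := fun l => pd_contDiff hφs l
  have hpd : ∀ l z, DifferentiableAt ℝ (pd φ l) z :=
    fun l z => ((hpds l).differentiable (by simp)).differentiableAt
  have hpdd : ∀ l m z, DifferentiableAt ℝ (pd (pd φ l) m) z :=
    fun l m z => ((pd_contDiff (hpds l) m).differentiable (by simp)).differentiableAt
  have hφne : ∀ z, φ z ≠ 0 := fun z => (hφpos z).ne'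
  have hzero : ∀ j, j ≠ k → ∀ x, pd φ j x = 0 := by
    intro j hjk x
    obtain ⟨i, hij, hik⟩ : ∃ i : Fin n, i ≠ j ∧ i ≠ k := by
      by_contra h
      push_neg at h
      have hsub : (Finset.univ : Finset (Fin n)) ⊆ {j, k} := by
        intro i _
        by_cases hi : i = j
        · simp [hi]
        · simp [h i hi]
      have hc := Finset.card_le_card hsub
      have hc2 : ({j, k} : Finset (Fin n)).card ≤ 2 :=
        (Finset.card_insert_le _ _).trans (by simp)
      simp [Finset.card_univ] at hc
      omega
    -- normalized form of the PDE
    have hLR : (fun y => pd (pd φ i) i y * (φ y)⁻¹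
        - (∑ l, pd φ l y * pd φ l y) * (2 * (φ y * φ y))⁻¹)
        = (fun y => (φ y * φ y) * f i (y k)) := by
      funext y
      have h := heq i y
      simp only [div_eq_mul_inv, pow_two] at h
      linarith [h]
    have hD := congrArg (fun g => pd g j x) hLR
    -- differentiability facts
    have dφi : DifferentiableAt ℝ (fun y => (φ y)⁻¹) x := (hφd x).inv (hφne x)
    have dA : DifferentiableAt ℝ (fun y => pd (pd φ i) i y * (φ y)⁻¹) x :=
      (hpdd i i x).mul dφi
    have dC : DifferentiableAt ℝ (fun y => ∑ l, pd φ l y * pd φ l y) x := by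
      apply DifferentiableAt.fun_sum
      exact fun l _ => (hpd l x).mul (hpd l x)
    have dW : DifferentiableAt ℝ (fun y => 2 * (φ y * φ y)) x :=
      (differentiableAt_const 2).mul ((hφd x).mul (hφd x))
    have hWne : 2 * (φ x * φ x) ≠ 0 := by
      have := hφpos x; positivity
    have dWi : DifferentiableAt ℝ (fun y => (2 * (φ y * φ y))⁻¹) x := dW.inv hWne
    -- compute the left side
    have h1 : pd (fun y => pd (pd φ i) i y * (φ y)⁻¹
        - (∑ l, pd φ l y * pd φ l y) * (2 * (φ y * φ y))⁻¹) j x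
        = pd (fun y => pd (pd φ i) i y * (φ y)⁻¹) j x
          - pd (fun y => (∑ l, pd φ l y * pd φ l y) * (2 * (φ y * φ y))⁻¹) j x :=
      pd_sub dA (dC.mul dWi) j
    have h2 : pd (fun y => pd (pd φ i) i y * (φ y)⁻¹) j x
        = pd (pd (pd φ i) i) j x * (φ x)⁻¹ + pd (pd φ i) i x * pd (fun y => (φ y)⁻¹) j x :=
      pd_mul (hpdd i i x) dφi j
    have h3 : pd (fun y => (φ y)⁻¹) j x = -(pd φ j x) / φ x ^ 2 :=
      pd_inv (hφd x) (hφne x) j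
    have h4 : pd (pd (pd φ i) i) j x = 0 := by
      rw [pd_comm (hpds i) i j x]
      have hzf : pd (pd φ i) j = fun _ => (0:ℝ) := funext (hmix j i hij.symm)
      rw [hzf, pd_const]
    have h5 : pd (fun y => (∑ l, pd φ l y * pd φ l y) * (2 * (φ y * φ y))⁻¹) j x
        = pd (fun y => ∑ l, pd φ l y * pd φ l y) j x * (2 * (φ x * φ x))⁻¹
          + (∑ l, pd φ l x * pd φ l x) * pd (fun y => (2 * (φ y * φ y))⁻¹) j x :=
      pd_mul dC dWi j
    have h6 : pd (fun y => ∑ l, pd φ l y * pd φ l y) j x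
        = 2 * pd φ j x * pd (pd φ j) j x := by
      rw [pd_sum (F := fun l y => pd φ l y * pd φ l y) (fun l => (hpd l x).mul (hpd l x)) j]
      rw [Finset.sum_congr rfl (fun l _ => pd_mul (hpd l x) (hpd l x) j)]
      rw [Finset.sum_eq_single j]
      · ring
      · intro l _ hlj
        rw [hmix j l hlj.symm x]
        ring
      · intro h; exact absurd (Finset.mem_univ j) h
    have h7 : pd (fun y => (2 * (φ y * φ y))⁻¹) j x
        = -(pd (fun y => 2 * (φ y * φ y)) j x) / (2 * (φ x * φ x)) ^ 2 :=
      pd_inv dW hWne j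
    have h8 : pd (fun y => 2 * (φ y * φ y)) j x
        = pd (fun _ => (2:ℝ)) j x * (φ x * φ x)
          + 2 * pd (fun y => φ y * φ y) j x :=
      pd_mul (differentiableAt_const 2) ((hφd x).mul (hφd x)) j
    have h11 : pd (fun y => φ y * φ y) j x = pd φ j x * φ x + φ x * pd φ j x :=
      pd_mul (hφd x) (hφd x) j
    -- compute the right side
    have dfk : DifferentiableAt ℝ (fun y => f i (y k)) x := by
      have h := (((hf i).differentiable (by simp)) (x k)).comp x
        ((ContinuousLinearMap.proj (R := ℝ) (φ := fun _ : Fin n => ℝ) k).differentiableAt)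
      exact h
    have h9 : pd (fun y => (φ y * φ y) * f i (y k)) j x
        = pd (fun y => φ y * φ y) j x * f i (x k)
          + (φ x * φ x) * pd (fun y => f i (y k)) j x :=
      pd_mul ((hφd x).mul (hφd x)) dfk j
    have h10 : pd (fun y => f i (y k)) j x = 0 := by
      rw [pd_eval_comp (((hf i).differentiable (by simp)) (x k)) j]
      rw [Pi.single_eq_of_ne (Ne.symm hjk)]
      ring
    rw [h1, h2, h3, h4, h5, h6, h7, h8, h9, h10, h11, pd_const] at hD
    -- now hD is a scalar identity; combine with the PDE at x
    have E1 := heq i x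
    have E2 := heq j x
    have key : pd φ j x * (3 * f i (x k) + f j (x k)) = 0 := by
      have ha := hφne x
      simp only [pow_two] at E1 E2
      field_simp at E1 E2 hD
      have key2 : (8 * φ x ^ 9) * (pd φ j x * (3 * f i (x k) + f j (x k))) = 0 := by
        linear_combination (-2 * φ x ^ 5) * hD - (4 * φ x ^ 5 * pd φ j x) * E1
          - (4 * φ x ^ 5 * pd φ j x) * E2
      exact (mul_eq_zero.1 key2).resolve_left
        (mul_ne_zero (by norm_num) (pow_ne_zero _ ha))
    have h3f := hne i j hij (x k)
    rcases mul_eq_zero.1 key with h | h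
    · exact h
    · exact absurd h h3f

  constructor
  · intro x y hxy
    set v := y - x with hv
    have hvk : v k = 0 := by simp [hv, hxy]
    have hfz : ∀ z, fderiv ℝ φ z v = 0 := by
      intro z
      have hv' : v = ∑ l, v l • (Pi.single l 1 : Fin n → ℝ) := by
        funext m
        rw [Finset.sum_apply]
        simp [Pi.single_apply]
      rw [hv', map_sum]
      refine Finset.sum_eq_zero fun l _ => ?_
      rw [map_smul]
      rcases eq_or_ne l k with rfl | hlk
      · simp [hvk]
      · have h0 : fderiv ℝ φ z (Pi.single l 1) = 0 := hzero l hlk z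
        rw [h0]; simp
    have hline : ∀ t : ℝ, HasDerivAt (fun s : ℝ => φ (x + s • v)) (fderiv ℝ φ (x + t • v) v) t := by
      intro t
      have h1 : HasDerivAt (fun s : ℝ => x + s • v) v t := by
        simpa using ((hasDerivAt_id t).smul_const v).const_add x
      exact (hφd _).hasFDerivAt.comp_hasDerivAt t h1
    have hconst : φ (x + (0:ℝ) • v) = φ (x + (1:ℝ) • v) := by
      apply is_const_of_deriv_eq_zero (f := fun s : ℝ => φ (x + s • v))
      · exact fun t => (hline t).differentiableAt
      · intro t
        rw [(hline t).deriv]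
        exact hfz _
    simpa [hv] using hconst
  · intro i hik x
    have hzf : pd φ i = fun _ => (0:ℝ) := funext (hzero i hik)
    have hA : pd (pd φ i) i x = 0 := by rw [hzf, pd_const]
    have hS : (∑ l, (pd φ l x) ^ 2) = (pd φ k x) ^ 2 := by
      rw [Finset.sum_eq_single k]
      · intro l _ hlk
        rw [hzero l hlk x]
        ring
      · intro h; exact absurd (Finset.mem_univ k) h
    have h := heq i x
    rw [hA, hS] at h
    have ha := hφne x
    field_simp at h ⊢
    linarith [h]
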